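/- arXiv:1809.08303 — 5 statements merged into one kernel-verified Lean document; each statement's English description precedes it below -/
import Mathlib

section
/- Let μ be a monotone measure, f : X → [0,∞) measurable with p = Su_{μ,A}(f) < ∞, and H : [0,∞) → [0,∞) a convex function attaining its infimum at a point a with p ≥ a. Then Su_{μ,A}(H∘f) ≥ min(H(p), p). -/
/-!
Past its minimiser `a` the convex function `H` is nondecreasing, so `G y := H (max y a)` is a
nondecreasing minorant of `H` on `[0, ∞)`, continuous on `(0, ∞)`. Given `c < min (H p) p`,
continuity gives `r < p` with `c < G r`. The supremum defining `p` forces `μ (A ∩ {f ≥ q}) > q`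
for `q := max r c < p`, and `{f ≥ q} ⊆ {H ∘ f ≥ G r}`, so the level `G r` shows `Su (H ∘ f) ≥ c`.
-/

open scoped ENNReal
open Set

variable {X : Type*}

/-- Generalized Sugeno integral with respect to a binary operation `op`. -/
noncomputable def gSugeno (op : ℝ≥0∞ → ℝ≥0∞ → ℝ≥0∞) (μ : Set X → ℝ≥0∞) (A : Set X)
    (f : X → ℝ≥0∞) : ℝ≥0∞ :=
  ⨆ t : ℝ≥0∞, op t (μ (A ∩ {x | t ≤ f x}))

/-- The Sugeno integral. -/
noncomputable def sugeno (μ : Set X → ℝ≥0∞) (A : Set X) (f : X → ℝ≥0∞) : ℝ≥0∞ :=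
  ⨆ t : ℝ≥0∞, min t (μ (A ∩ {x | t ≤ f x}))

open Filter Topology

theorem ConvexOn.monotoneOn_of_isMinOn {𝕜 β : Type*} [Field 𝕜] [LinearOrder 𝕜]
    [IsStrictOrderedRing 𝕜] [AddCommMonoid β] [LinearOrder β] [IsOrderedCancelAddMonoid β]
    [Module 𝕜 β] [PosSMulStrictMono 𝕜 β] {s : Set 𝕜} {f : 𝕜 → β} {a : 𝕜}
    (hf : ConvexOn 𝕜 s f) (ha : a ∈ s) (hmin : IsMinOn f s a) : MonotoneOn f (s ∩ Ici a) := by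
  rintro u ⟨hu, hau⟩ v ⟨hv, -⟩ huv
  rcases (mem_Ici.1 hau).eq_or_lt with rfl | hau
  · exact hmin hv
  · exact hf.le_right_of_left_le'' ha hv hau huv (hmin hu)

theorem MonotoneOn.monotone_comp_max {α β : Type*} [LinearOrder α] [Preorder β] {f : α → β}
    {a : α} (hf : MonotoneOn f (Ici a)) : Monotone fun x => f (max x a) :=
  fun _ _ h => hf (le_max_right _ _) (le_max_right _ _) (max_le_max_right a h)

theorem ConvexOn.measurableSet_le_comp [MeasurableSpace X] {s : Set ℝ} {H : ℝ → ℝ}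
    (hH : ConvexOn ℝ s H) {f : X → ℝ} (hf : Measurable f) (hfs : ∀ x, f x ∈ s) (c : ℝ) :
    MeasurableSet {x | c ≤ H (f x)} := by
  have : {x | c ≤ H (f x)} = (f ⁻¹' {y ∈ s | H y < c})ᶜ := by
    ext x
    simp [hfs x]
  rw [this]
  exact (hf (hH.convex_lt c).ordConnected.measurableSet).compl

theorem apply_max_le_of_isMinOn {α β : Type*} [LinearOrder α] [Preorder β] {f : α → β} {s : Set α}
    {a y : α} (hmin : IsMinOn f s a) (hy : y ∈ s) : f (max y a) ≤ f y := by
  rcases le_total y a with h | h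
  · rw [max_eq_right h]
    exact hmin hy
  · rw [max_eq_left h]

section Sugeno

variable [MeasurableSpace X]

def MonotoneOnMeasurableSets (μ : Set X → ℝ≥0∞) : Prop :=
  ∀ B C : Set X, MeasurableSet B → MeasurableSet C → B ⊆ C → μ B ≤ μ C

theorem lt_measure_of_lt_sugeno {μ : Set X → ℝ≥0∞} {A : Set X} {f : X → ℝ≥0∞}
    (hμ : MonotoneOnMeasurableSets μ) (hA : MeasurableSet A) (hf : Measurable f) {q : ℝ≥0∞}
    (hq : q < sugeno μ A f) : q < μ (A ∩ {x | q ≤ f x}) := by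
  have hlevel : ∀ s, MeasurableSet (A ∩ {x | s ≤ f x}) :=
    fun s => hA.inter (measurableSet_le measurable_const hf)
  obtain ⟨s, hs⟩ := lt_iSup_iff.1 hq
  obtain ⟨hqs, hqμ⟩ := lt_min_iff.1 hs
  exact hqμ.trans_le <| hμ _ _ (hlevel s) (hlevel q) <|
    inter_subset_inter_right _ fun x hx => hqs.le.trans hx

theorem min_le_sugeno_of_lt_sugeno {μ : Set X → ℝ≥0∞} {A : Set X} {f g : X → ℝ≥0∞}
    (hμ : MonotoneOnMeasurableSets μ) (hA : MeasurableSet A) (hf : Measurable f) {q t : ℝ≥0∞}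
    (hq : q < sugeno μ A f) (hg : MeasurableSet (A ∩ {x | t ≤ g x}))
    (hqt : ∀ x, q ≤ f x → t ≤ g x) : min t q ≤ sugeno μ A g :=
  calc min t q ≤ min t (μ (A ∩ {x | t ≤ g x})) :=
        min_le_min_left _ <| (lt_measure_of_lt_sugeno hμ hA hf hq).le.trans <|
          hμ _ _ (hA.inter (measurableSet_le measurable_const hf)) hg
            (inter_subset_inter_right _ hqt)
    _ ≤ sugeno μ A g := le_iSup (fun s => min s (μ (A ∩ {x | s ≤ g x}))) t

theorem min_le_sugeno_of_monotone_comp_le {μ : Set X → ℝ≥0∞} {A : Set X} {f : X → ℝ}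
    {g : X → ℝ≥0∞} {G : ℝ → ℝ} (hμ : MonotoneOnMeasurableSets μ) (hA : MeasurableSet A)
    (hf : Measurable f) (hfpos : ∀ x, 0 ≤ f x)
    (hfin : sugeno μ A (fun x => ENNReal.ofReal (f x)) ≠ ⊤)
    (hG : Monotone G) (hGc : ContinuousOn G (Ioi 0))
    (hg : ∀ t : ℝ, MeasurableSet (A ∩ {x | ENNReal.ofReal t ≤ g x}))
    (hGg : ∀ x, ENNReal.ofReal (G (f x)) ≤ g x) :
    min (ENNReal.ofReal (G (sugeno μ A fun x => ENNReal.ofReal (f x)).toReal))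
      (sugeno μ A fun x => ENNReal.ofReal (f x)) ≤ sugeno μ A g := by
  set p := sugeno μ A fun x => ENNReal.ofReal (f x)
  refine le_of_forall_lt_imp_le_of_dense fun c hc => ?_
  obtain ⟨hcG, hcp⟩ := lt_min_iff.1 hc
  have hp0 : 0 < p.toReal := ENNReal.toReal_pos (ne_bot_of_gt hcp) hfin
  have hcont : ContinuousAt (fun y => ENNReal.ofReal (G y)) p.toReal :=
    ENNReal.continuous_ofReal.continuousAt.comp (hGc.continuousAt (Ioi_mem_nhds hp0))
  obtain ⟨r, hcr, hrp⟩ : ∃ r, c < ENNReal.ofReal (G r) ∧ r < p.toReal :=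
    (((hcont.eventually (lt_mem_nhds hcG)).filter_mono nhdsWithin_le_nhds).and
      (self_mem_nhdsWithin : Iio p.toReal ∈ 𝓝[<] p.toReal)).exists
  have hrp' : ENNReal.ofReal r < p := by
    rw [← ENNReal.ofReal_toReal hfin]
    exact (ENNReal.ofReal_lt_ofReal_iff hp0).2 hrp
  refine le_trans ?_ (min_le_sugeno_of_lt_sugeno hμ hA (ENNReal.measurable_ofReal.comp hf)
    (max_lt hrp' hcp) (hg (G r)) fun x hx => ?_)
  · exact le_min hcr.le (le_max_right _ _)
  · have hrx : r ≤ f x := (ENNReal.ofReal_le_ofReal_iff (hfpos x)).1 ((le_max_left _ _).trans hx)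
    exact (ENNReal.ofReal_le_ofReal (hG hrx)).trans (hGg x)

end Sugeno

theorem stmt3_general [MeasurableSpace X] (μ : Set X → ℝ≥0∞) (A : Set X) (hA : MeasurableSet A)
    (hμmono : ∀ B C : Set X, MeasurableSet B → MeasurableSet C → B ⊆ C → μ B ≤ μ C)
    (f : X → ℝ) (hf : Measurable f) (hfpos : ∀ x, 0 ≤ f x)
    (H : ℝ → ℝ)
    (hHconv : ConvexOn ℝ (Ici (0 : ℝ)) H)
    (a : ℝ) (ha : 0 ≤ a) (hinf : ∀ y ∈ Ici (0 : ℝ), H a ≤ H y)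
    (p : ℝ≥0∞) (hp : p = sugeno μ A (fun x => ENNReal.ofReal (f x)))
    (hpfin : p ≠ ⊤) (hap : ENNReal.ofReal a ≤ p) :
    min (ENNReal.ofReal (H p.toReal)) p
      ≤ sugeno μ A (fun x => ENNReal.ofReal (H (f x))) := by
  have hpa : a ≤ p.toReal := (ENNReal.ofReal_le_iff_le_toReal hpfin).1 hap
  have hmin : IsMinOn H (Ici 0) a := hinf
  have hG : Monotone fun y => H (max y a) :=
    ((hHconv.monotoneOn_of_isMinOn ha hmin).mono fun y hy => ⟨ha.trans hy, hy⟩).monotone_comp_max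
  have hGc : ContinuousOn (fun y => H (max y a)) (Ioi 0) := by
    refine ContinuousOn.comp (t := Ioi 0) ?_ (by fun_prop)
      fun y (hy : 0 < y) => lt_max_of_lt_left hy
    simpa using hHconv.continuousOn_interior
  have hmeas : ∀ t : ℝ, MeasurableSet (A ∩ {x | ENNReal.ofReal t ≤ ENNReal.ofReal (H (f x))}) := by
    intro t
    simp only [ENNReal.ofReal_le_ofReal_iff', ofPred_or]
    exact hA.inter ((hHconv.measurableSet_le_comp hf hfpos t).union (.const _))
  have key := min_le_sugeno_of_monotone_comp_le hμmono hA hf hfpos (hp ▸ hpfin) hG hGc hmeas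
    fun x => ENNReal.ofReal_le_ofReal (apply_max_le_of_isMinOn hmin (hfpos x))
  rwa [← hp, max_eq_left hpa] at key

theorem stmt3 [MeasurableSpace X] (μ : Set X → ℝ≥0∞) (A : Set X) (hA : MeasurableSet A)
    (hμ0 : μ ∅ = 0)
    (hμmono : ∀ B C : Set X, MeasurableSet B → MeasurableSet C → B ⊆ C → μ B ≤ μ C)
    (f : X → ℝ) (hf : Measurable f) (hfpos : ∀ x, 0 ≤ f x)
    (H : ℝ → ℝ) (hHpos : ∀ y ∈ Ici (0 : ℝ), 0 ≤ H y)
    (hHconv : ConvexOn ℝ (Ici (0 : ℝ)) H)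
    (a : ℝ) (ha : 0 ≤ a) (hinf : ∀ y ∈ Ici (0 : ℝ), H a ≤ H y)
    (p : ℝ≥0∞) (hp : p = sugeno μ A (fun x => ENNReal.ofReal (f x)))
    (hpfin : p ≠ ⊤) (hap : ENNReal.ofReal a ≤ p) :
    min (ENNReal.ofReal (H p.toReal)) p
      ≤ sugeno μ A (fun x => ENNReal.ofReal (H (f x))) :=
  stmt3_general μ A hA hμmono f hf hfpos H hHconv a ha hinf p hp hpfin hap
end

section
/- Let μ be a monotone measure with μ(A) < ∞, f : X → [0,∞) measurable, and H : [0,∞) → [0,∞) nondecreasing and left-continuous at p = Su_{μ,A}(f). Then the Shilkret integral satisfies Sh_{μ,A}(H∘f) := sup_{t≥0} t · μ(A ∩ {H(f) ≥ t}) ≥ H(p)·p. -/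
/-!
For `s < p`, the definition of the Sugeno integral gives a level `t > s` whose superlevel set has
measure `> s`; on that set `H ∘ f ≥ H s`, so the Shilkret integral of `H ∘ f` is at least
`H(s) · s`. Letting `s` increase to `p`, left continuity of `H` at `p` gives `H(p) · p`.
-/

open scoped ENNReal
open Set

variable {X : Type*}

/-- The Shilkret integral. -/
noncomputable def shilkret (μ : Set X → ℝ≥0∞) (A : Set X) (f : X → ℝ≥0∞) : ℝ≥0∞ :=
  ⨆ t : ℝ≥0∞, t * μ (A ∩ {x | t ≤ f x})

open Filter Topology

section MonotoneMeasure

variable {μ : Set X → ℝ≥0∞} {A : Set X} {f : X → ℝ≥0∞}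

lemma exists_lt_measure_superlevel_of_lt_sugeno {s : ℝ≥0∞} (hs : s < sugeno μ A f) :
    ∃ t, s < t ∧ s < μ (A ∩ {x | t ≤ f x}) := by
  obtain ⟨t, ht⟩ := lt_iSup_iff.mp hs
  exact ⟨t, lt_min_iff.mp ht⟩

lemma mul_measure_superlevel_le_shilkret (t : ℝ≥0∞) :
    t * μ (A ∩ {x | t ≤ f x}) ≤ shilkret μ A f :=
  le_iSup (fun t => t * μ (A ∩ {x | t ≤ f x})) t

variable [MeasurableSpace X]

def IsMonotoneMeasure (μ : Set X → ℝ≥0∞) : Prop :=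
  ∀ B C : Set X, MeasurableSet B → MeasurableSet C → B ⊆ C → μ B ≤ μ C

lemma sugeno_le_measure (hA : MeasurableSet A) (hμ : IsMonotoneMeasure μ) (hf : Measurable f) :
    sugeno μ A f ≤ μ A :=
  iSup_le fun _ => (min_le_right _ _).trans
    (hμ _ _ (hA.inter (measurableSet_le measurable_const hf)) hA inter_subset_left)

lemma mul_le_shilkret_comp_of_lt_sugeno (hA : MeasurableSet A) (hμ : IsMonotoneMeasure μ)
    (hf : Measurable f) {φ : ℝ≥0∞ → ℝ≥0∞} (hφ : Monotone φ) {s : ℝ≥0∞}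
    (hs : s < sugeno μ A f) : φ s * s ≤ shilkret μ A (φ ∘ f) := by
  obtain ⟨t, hst, hμt⟩ := exists_lt_measure_superlevel_of_lt_sugeno hs
  have hsub : A ∩ {x | t ≤ f x} ⊆ A ∩ {x | φ s ≤ φ (f x)} :=
    fun x ⟨hxA, hx⟩ => ⟨hxA, hφ (hst.le.trans hx)⟩
  have hmeas : MeasurableSet (A ∩ {x | φ s ≤ φ (f x)}) :=
    hA.inter (measurableSet_le measurable_const (hφ.measurable.comp hf))
  calc φ s * s ≤ φ s * μ (A ∩ {x | φ s ≤ φ (f x)}) := by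
        gcongr
        exact hμt.le.trans (hμ _ _ (hA.inter (measurableSet_le measurable_const hf)) hmeas hsub)
    _ ≤ shilkret μ A (φ ∘ f) := mul_measure_superlevel_le_shilkret (φ s)

theorem mul_sugeno_le_shilkret_comp (hA : MeasurableSet A) (hμ : IsMonotoneMeasure μ)
    (hf : Measurable f) {φ : ℝ≥0∞ → ℝ≥0∞} (hφ : Monotone φ)
    (hφc : ContinuousWithinAt φ (Iio (sugeno μ A f)) (sugeno μ A f)) :
    φ (sugeno μ A f) * sugeno μ A f ≤ shilkret μ A (φ ∘ f) := by
  set p := sugeno μ A f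
  rcases eq_or_ne (φ p * p) 0 with h0 | h0
  · simp [h0]
  obtain ⟨hφp, hp⟩ := mul_ne_zero_iff.mp h0
  have hlim : Tendsto (fun s => φ s * s) (𝓝[<] p) (𝓝 (φ p * p)) :=
    ENNReal.Tendsto.mul hφc (Or.inl hφp) (tendsto_id.mono_left nhdsWithin_le_nhds)
      (Or.inl hp)
  have : (𝓝[<] p).NeBot := nhdsLT_neBot_of_exists_lt ⟨0, pos_iff_ne_zero.mpr hp⟩
  exact le_of_tendsto hlim (eventually_nhdsWithin_of_forall fun s hs =>
    mul_le_shilkret_comp_of_lt_sugeno hA hμ hf hφ hs)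

end MonotoneMeasure

section ExtendENNReal

/-- The value `⊤` at `⊤`, where `toReal` would give `0`, keeps the extension of a function
monotone on `[0, ∞)` monotone. -/
noncomputable def extendENNReal (H : ℝ → ℝ) (s : ℝ≥0∞) : ℝ≥0∞ :=
  if s = ⊤ then ⊤ else ENNReal.ofReal (H s.toReal)

variable {H : ℝ → ℝ}

lemma extendENNReal_of_ne_top {s : ℝ≥0∞} (hs : s ≠ ⊤) :
    extendENNReal H s = ENNReal.ofReal (H s.toReal) :=
  if_neg hs

lemma extendENNReal_ofReal {y : ℝ} (hy : 0 ≤ y) :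
    extendENNReal H (ENNReal.ofReal y) = ENNReal.ofReal (H y) := by
  rw [extendENNReal_of_ne_top ENNReal.ofReal_ne_top, ENNReal.toReal_ofReal hy]

lemma monotone_extendENNReal (hH : MonotoneOn H (Ici 0)) : Monotone (extendENNReal H) := by
  intro s s' hss'
  rcases eq_or_ne s' ⊤ with rfl | hs'
  · simp [extendENNReal]
  rw [extendENNReal_of_ne_top hs', extendENNReal_of_ne_top (ne_top_of_le_ne_top hs' hss')]
  exact ENNReal.ofReal_le_ofReal (hH ENNReal.toReal_nonneg ENNReal.toReal_nonneg
    (ENNReal.toReal_mono hs' hss'))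

lemma continuousWithinAt_extendENNReal {p : ℝ≥0∞} (hp : p ≠ ⊤)
    (hH : ContinuousWithinAt H (Iio p.toReal) p.toReal) :
    ContinuousWithinAt (extendENNReal H) (Iio p) p := by
  have hcomp : ContinuousWithinAt (fun s => ENNReal.ofReal (H s.toReal)) (Iio p) p :=
    ENNReal.continuous_ofReal.continuousAt.comp_continuousWithinAt
      (hH.comp (ENNReal.continuousAt_toReal hp).continuousWithinAt
        fun s hs => ENNReal.toReal_strict_mono hp hs)
  exact hcomp.congr (fun s hs => extendENNReal_of_ne_top (ne_top_of_lt hs))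
    (extendENNReal_of_ne_top hp)

end ExtendENNReal

theorem stmt4_general [MeasurableSpace X] (μ : Set X → ℝ≥0∞) (A : Set X) (hA : MeasurableSet A)
    (hμmono : ∀ B C : Set X, MeasurableSet B → MeasurableSet C → B ⊆ C → μ B ≤ μ C)
    (hμA : μ A ≠ ⊤)
    (f : X → ℝ) (hf : Measurable f) (hfpos : ∀ x, 0 ≤ f x)
    (H : ℝ → ℝ)
    (hHmono : MonotoneOn H (Ici (0 : ℝ)))
    (p : ℝ≥0∞) (hp : p = sugeno μ A (fun x => ENNReal.ofReal (f x)))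
    (hHlc : ContinuousWithinAt H (Iio p.toReal) p.toReal) :
    ENNReal.ofReal (H p.toReal) * p
      ≤ shilkret μ A (fun x => ENNReal.ofReal (H (f x))) := by
  have hg : Measurable fun x => ENNReal.ofReal (f x) := ENNReal.measurable_ofReal.comp hf
  have hp_top : p ≠ ⊤ := ne_top_of_le_ne_top hμA (hp ▸ sugeno_le_measure hA hμmono hg)
  have hcomp : (extendENNReal H ∘ fun x => ENNReal.ofReal (f x))
      = fun x => ENNReal.ofReal (H (f x)) :=
    funext fun x => extendENNReal_ofReal (hfpos x)
  have key := mul_sugeno_le_shilkret_comp hA hμmono hg (monotone_extendENNReal hHmono)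
    (hp ▸ continuousWithinAt_extendENNReal hp_top hHlc)
  rwa [← hp, hcomp, extendENNReal_of_ne_top hp_top] at key

theorem stmt4 [MeasurableSpace X] (μ : Set X → ℝ≥0∞) (A : Set X) (hA : MeasurableSet A)
    (hμ0 : μ ∅ = 0)
    (hμmono : ∀ B C : Set X, MeasurableSet B → MeasurableSet C → B ⊆ C → μ B ≤ μ C)
    (hμA : μ A ≠ ⊤)
    (f : X → ℝ) (hf : Measurable f) (hfpos : ∀ x, 0 ≤ f x)
    (H : ℝ → ℝ) (hHpos : ∀ y ∈ Ici (0 : ℝ), 0 ≤ H y)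
    (hHmono : MonotoneOn H (Ici (0 : ℝ)))
    (p : ℝ≥0∞) (hp : p = sugeno μ A (fun x => ENNReal.ofReal (f x)))
    (hHlc : ContinuousWithinAt H (Iio p.toReal) p.toReal) :
    ENNReal.ofReal (H p.toReal) * p
      ≤ shilkret μ A (fun x => ENNReal.ofReal (H (f x))) :=
  stmt4_general μ A hA hμmono hμA f hf hfpos H hHmono p hp hHlc
end

section
/- Let H : [0,∞] → [0,∞] be continuous, increasing on [0,c] and decreasing on [c,∞], with c ∈ [a,b] ⊆ [0,∞). Let μ be a monotone measure, f : X → [a,b] measurable, and p = Su_{μ,A}(f) ≤ c. Then Su_{μ,A}(H∘f) ≤ min( max(H(p), p), H(c), μ(A) ). -/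
open scoped ENNReal
open Set

variable {X : Type*}

/-! The Sugeno integral is at most `q` iff every superlevel set `{t ≤ g}` with `t > q` has
measure at most `q`. For `H ∘ f` and `H p < t`, the set `{t ≤ H ∘ f}` is empty when `t > H c`
(the peak value of `H`); otherwise the intermediate value theorem on `[p, c]` gives `s > p` with
`H s = t`, and monotonicity of `H` on `[0, c]` puts `{t ≤ H ∘ f}` inside `{s ≤ f}`, whose
measure is at most `p` since `p` is the Sugeno integral of `f`. -/

section Unimodal

variable {α β : Type*}

theorem apply_le_apply_of_monotoneOn_Iic_of_antitoneOn_Ici [LinearOrder α] [Preorder β]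
    {H : α → β} {c : α} (hinc : MonotoneOn H (Iic c)) (hdec : AntitoneOn H (Ici c)) (y : α) :
    H y ≤ H c := by
  rcases le_total y c with h | h
  · exact hinc h self_mem_Iic h
  · exact hdec self_mem_Ici h h

theorem exists_gt_setOf_le_apply_subset_Ici [ConditionallyCompleteLinearOrder α]
    [TopologicalSpace α] [OrderTopology α] [DenselyOrdered α] [LinearOrder β]
    [TopologicalSpace β] [OrderClosedTopology β] {H : α → β} {p c : α} {t : β}
    (hcont : ContinuousOn H (Icc p c)) (hinc : StrictMonoOn H (Iic c)) (hpc : p ≤ c)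
    (hpt : H p < t) (htc : t ≤ H c) :
    ∃ s, p < s ∧ {y | t ≤ H y} ⊆ Ici s := by
  obtain ⟨s, ⟨hps, hsc⟩, rfl⟩ := intermediate_value_Icc hpc hcont ⟨hpt.le, htc⟩
  refine ⟨s, hps.lt_of_ne ?_, fun y hy => le_of_not_gt fun hys => ?_⟩
  · rintro rfl
    exact hpt.false
  · exact (hinc (hys.le.trans hsc) hsc hys).not_ge hy

end Unimodal

section Sugeno

variable {μ : Set X → ℝ≥0∞} {A : Set X} {g : X → ℝ≥0∞}

theorem sugeno_le_iff {q : ℝ≥0∞} :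
    sugeno μ A g ≤ q ↔ ∀ t, q < t → μ (A ∩ {x | t ≤ g x}) ≤ q := by
  refine ⟨fun hq t hqt => ?_, fun h => iSup_le fun t => ?_⟩
  · by_contra! hlt
    exact (lt_min hqt hlt).not_ge ((le_iSup _ t).trans hq)
  · rcases le_or_gt t q with htq | hqt
    · exact (min_le_left _ _).trans htq
    · exact (min_le_right _ _).trans (h t hqt)

theorem measure_inter_setOf_le_eq_zero (hμ0 : μ ∅ = 0) {t : ℝ≥0∞} (hg : ∀ x, g x < t) :
    μ (A ∩ {x | t ≤ g x}) = 0 := by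
  have hempty : A ∩ {x | t ≤ g x} = ∅ :=
    eq_empty_of_forall_notMem fun x hx => (hg x).not_ge hx.2
  rw [hempty, hμ0]

theorem sugeno_le_of_forall_le (hμ0 : μ ∅ = 0) {M : ℝ≥0∞} (hg : ∀ x, g x ≤ M) :
    sugeno μ A g ≤ M :=
  sugeno_le_iff.2 fun _ hMt =>
    (measure_inter_setOf_le_eq_zero hμ0 fun x => (hg x).trans_lt hMt).trans_le zero_le

theorem sugeno_le_measure_s10 [MeasurableSpace X] (hA : MeasurableSet A)
    (hμmono : ∀ B C : Set X, MeasurableSet B → MeasurableSet C → B ⊆ C → μ B ≤ μ C)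
    (hg : Measurable g) : sugeno μ A g ≤ μ A :=
  iSup_le fun _ =>
    (min_le_right _ _).trans (hμmono _ A (hA.inter (hg measurableSet_Ici)) hA inter_subset_left)

end Sugeno

theorem stmt10_general [MeasurableSpace X] (μ : Set X → ℝ≥0∞) (A : Set X) (hA : MeasurableSet A)
    (hμ0 : μ ∅ = 0)
    (hμmono : ∀ B C : Set X, MeasurableSet B → MeasurableSet C → B ⊆ C → μ B ≤ μ C)
    (H : ℝ≥0∞ → ℝ≥0∞) (hHcont : Continuous H)
    (c : ℝ≥0∞)
    (hHinc : StrictMonoOn H (Icc 0 c)) (hHdec : StrictAntiOn H (Ici c))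
    (f : X → ℝ≥0∞) (hf : Measurable f)
    (p : ℝ≥0∞) (hp : p = sugeno μ A f) (hpc : p ≤ c) :
    sugeno μ A (H ∘ f) ≤ min (min (max (H p) p) (H c)) (μ A) := by
  have hinc : StrictMonoOn H (Iic c) := by simpa [← Ici_inter_Iic] using hHinc
  have hHmax := apply_le_apply_of_monotoneOn_Iic_of_antitoneOn_Ici hinc.monotoneOn
    hHdec.antitoneOn
  refine le_min (le_min ?_ (sugeno_le_of_forall_le hμ0 fun x => hHmax (f x)))
    (sugeno_le_measure_s10 hA hμmono (hHcont.measurable.comp hf))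
  refine sugeno_le_iff.2 fun t ht => ?_
  rcases le_or_gt t (H c) with htc | hct
  · obtain ⟨s, hps, hsub⟩ := exists_gt_setOf_le_apply_subset_Ici hHcont.continuousOn hinc hpc
      ((le_max_left _ _).trans_lt ht) htc
    calc μ (A ∩ {x | t ≤ (H ∘ f) x})
        ≤ μ (A ∩ {x | s ≤ f x}) :=
          hμmono _ _ (hA.inter ((hHcont.measurable.comp hf) measurableSet_Ici))
            (hA.inter (hf measurableSet_Ici)) (inter_subset_inter_right A fun x hx => hsub hx)
      _ ≤ p := sugeno_le_iff.1 hp.ge s hps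
      _ ≤ max (H p) p := le_max_right _ _
  · exact (measure_inter_setOf_le_eq_zero hμ0 fun x => (hHmax (f x)).trans_lt hct).trans_le
      zero_le

theorem stmt10 [MeasurableSpace X] (μ : Set X → ℝ≥0∞) (A : Set X) (hA : MeasurableSet A)
    (hμ0 : μ ∅ = 0)
    (hμmono : ∀ B C : Set X, MeasurableSet B → MeasurableSet C → B ⊆ C → μ B ≤ μ C)
    (H : ℝ≥0∞ → ℝ≥0∞) (hHcont : Continuous H)
    (a b c : ℝ≥0∞) (hb : b ≠ ⊤) (hc : c ∈ Icc a b)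
    (hHinc : StrictMonoOn H (Icc 0 c)) (hHdec : StrictAntiOn H (Ici c))
    (f : X → ℝ≥0∞) (hf : Measurable f) (hfab : ∀ x, f x ∈ Icc a b)
    (p : ℝ≥0∞) (hp : p = sugeno μ A f) (hpc : p ≤ c) :
    sugeno μ A (H ∘ f) ≤ min (min (max (H p) p) (H c)) (μ A) :=
  stmt10_general μ A hA hμ0 hμmono H hHcont c hHinc hHdec f hf p hp hpc
end

section
/- Let μ be a continuous monotone measure (continuous from below and from above), ∘ a nondecreasing binary map on [0,∞] with a∘0 = 0 for all a, f : X → [0,∞] measurable, H : [0,∞] → [0,∞] with H∘f measurable, and p = Su_{μ,A}(f) < ∞. Then I_{∘,μ,A}(H(f)) ≥ max( (inf H([p,∞])) ∘ p, (inf H) ∘ μ(A) ) and I_{∘,μ,A}(H(f)) ≤ max( (sup H([0,p])) ∘ μ(A), (sup H) ∘ p ). -/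
open scoped ENNReal
open Set

variable {X : Type*}

/-!
Write `p` for the Sugeno integral of `f` and `g t = μ (A ∩ {t ≤ f})`, an antitone function
of `t`. Every `t < p` satisfies `t < g t`, so `g s ≥ p` for all `s < p`, and continuity from
above gives `g p ≥ p`; every `t > p` satisfies `g t ≤ p`, so continuity from below gives
`μ (A ∩ {p < f}) ≤ p`.

For the lower bound, `H ∘ f ≥ ⨅ H [p, ∞]` on `A ∩ {p ≤ f}` and `H ∘ f ≥ ⨅ H` on `A`. For the
upper bound, a level `t` of `H ∘ f` either satisfies `t ≤ ⨆ H [0, p]`, or its superlevel set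
lies in `A ∩ {p < f}` and has measure at most `p`.
-/

section

variable {μ : Set X → ℝ≥0∞} {A : Set X} {f : X → ℝ≥0∞} {op : ℝ≥0∞ → ℝ≥0∞ → ℝ≥0∞}
  {H : ℝ≥0∞ → ℝ≥0∞}

lemma le_gSugeno (t : ℝ≥0∞) :
    op t (μ (A ∩ {x | t ≤ f x})) ≤ gSugeno op μ A f :=
  le_iSup (fun t => op t (μ (A ∩ {x | t ≤ f x}))) t

lemma op_iInf_le_gSugeno_comp :
    op (⨅ y, H y) (μ A) ≤ gSugeno op μ A (H ∘ f) := by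
  have hset : A ∩ {x | ⨅ y, H y ≤ (H ∘ f) x} = A :=
    inter_eq_left.mpr fun x _ => iInf_le H (f x)
  simpa only [hset] using le_gSugeno (op := op) (μ := μ) (A := A) (f := H ∘ f) (⨅ y, H y)

variable [MeasurableSpace X]

lemma measure_superlevel_anti
    (hμ : ∀ B C : Set X, MeasurableSet B → MeasurableSet C → B ⊆ C → μ B ≤ μ C)
    (hA : MeasurableSet A) (hf : Measurable f) {s t : ℝ≥0∞} (hst : s ≤ t) :
    μ (A ∩ {x | t ≤ f x}) ≤ μ (A ∩ {x | s ≤ f x}) :=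
  hμ _ _ (hA.inter (hf measurableSet_Ici)) (hA.inter (hf measurableSet_Ici))
    (inter_subset_inter_right _ fun _ hx => hst.trans hx)

lemma lt_measure_superlevel_of_lt_sugeno
    (hμ : ∀ B C : Set X, MeasurableSet B → MeasurableSet C → B ⊆ C → μ B ≤ μ C)
    (hA : MeasurableSet A) (hf : Measurable f) {t : ℝ≥0∞} (ht : t < sugeno μ A f) :
    t < μ (A ∩ {x | t ≤ f x}) := by
  obtain ⟨s, hs⟩ := lt_iSup_iff.mp ht
  rw [lt_min_iff] at hs
  exact hs.2.trans_le (measure_superlevel_anti hμ hA hf hs.1.le)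

lemma sugeno_le_measure_superlevel_of_lt
    (hμ : ∀ B C : Set X, MeasurableSet B → MeasurableSet C → B ⊆ C → μ B ≤ μ C)
    (hA : MeasurableSet A) (hf : Measurable f) {s : ℝ≥0∞} (hs : s < sugeno μ A f) :
    sugeno μ A f ≤ μ (A ∩ {x | s ≤ f x}) := by
  refine le_of_forall_lt fun c hc => ?_
  calc c ≤ max s c := le_max_right s c
    _ < μ (A ∩ {x | max s c ≤ f x}) :=
      lt_measure_superlevel_of_lt_sugeno hμ hA hf (max_lt hs hc)
    _ ≤ μ (A ∩ {x | s ≤ f x}) := measure_superlevel_anti hμ hA hf (le_max_left s c)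

lemma sugeno_le_measure_superlevel_sugeno
    (hμ : ∀ B C : Set X, MeasurableSet B → MeasurableSet C → B ⊆ C → μ B ≤ μ C)
    (hμabove : ∀ s : ℕ → Set X, (∀ n, MeasurableSet (s n)) → Antitone s →
      μ (⋂ n, s n) = ⨅ n, μ (s n))
    (hA : MeasurableSet A) (hf : Measurable f) :
    sugeno μ A f ≤ μ (A ∩ {x | sugeno μ A f ≤ f x}) := by
  set p := sugeno μ A f
  rcases eq_zero_or_pos p with hzero | hpos
  · rw [hzero]; exact zero_le
  obtain ⟨u, u_mono, u_mem, u_lim⟩ := exists_seq_strictMono_tendsto' hpos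
  have hset : A ∩ {x | p ≤ f x} = ⋂ n, A ∩ {x | u n ≤ f x} := by
    ext x
    simp only [mem_inter_iff, mem_iInter, mem_ofPred_eq]
    exact ⟨fun h n => ⟨h.1, (u_mem n).2.le.trans h.2⟩,
      fun h => ⟨(h 0).1, le_of_tendsto' u_lim fun n => (h n).2⟩⟩
  rw [hset, hμabove (fun n => A ∩ {x | u n ≤ f x}) (fun n => hA.inter (hf measurableSet_Ici))
    fun m n hmn => inter_subset_inter_right _ fun x hx => (u_mono.monotone hmn).trans hx]
  exact le_iInf fun n => sugeno_le_measure_superlevel_of_lt hμ hA hf (u_mem n).2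

lemma measure_sugeno_lt_le_sugeno
    (hμbelow : ∀ s : ℕ → Set X, (∀ n, MeasurableSet (s n)) → Monotone s →
      μ (⋃ n, s n) = ⨆ n, μ (s n))
    (hA : MeasurableSet A) (hf : Measurable f) :
    μ (A ∩ {x | sugeno μ A f < f x}) ≤ sugeno μ A f := by
  set p := sugeno μ A f
  rcases eq_or_ne p ⊤ with htop | hfin
  · rw [htop]; exact le_top
  obtain ⟨u, u_anti, u_mem, u_lim⟩ := exists_seq_strictAnti_tendsto' hfin.lt_top
  have hset : A ∩ {x | p < f x} = ⋃ n, A ∩ {x | u n ≤ f x} := by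
    ext x
    simp only [mem_inter_iff, mem_iUnion, mem_ofPred_eq]
    refine ⟨fun h => ?_, fun ⟨n, hxA, hn⟩ => ⟨hxA, (u_mem n).1.trans_le hn⟩⟩
    obtain ⟨n, hn⟩ := (u_lim.eventually (gt_mem_nhds h.2)).exists
    exact ⟨n, h.1, hn.le⟩
  rw [hset, hμbelow (fun n => A ∩ {x | u n ≤ f x}) (fun n => hA.inter (hf measurableSet_Ici))
    fun m n hmn => inter_subset_inter_right _ fun x hx => (u_anti.antitone hmn).trans hx]
  refine iSup_le fun n => ?_
  have hmin : min (u n) (μ (A ∩ {x | u n ≤ f x})) ≤ p :=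
    le_iSup (fun t => min t (μ (A ∩ {x | t ≤ f x}))) (u n)
  exact (min_le_iff.mp hmin).resolve_left (u_mem n).1.not_ge

lemma op_iInf_Ici_le_gSugeno_comp
    (hμ : ∀ B C : Set X, MeasurableSet B → MeasurableSet C → B ⊆ C → μ B ≤ μ C)
    (hop : ∀ a, Monotone (op a)) (hA : MeasurableSet A) (hf : Measurable f)
    (hHf : Measurable (H ∘ f)) {p : ℝ≥0∞} (hp : p ≤ μ (A ∩ {x | p ≤ f x})) :
    op (⨅ y ∈ Ici p, H y) p ≤ gSugeno op μ A (H ∘ f) := by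
  have hsub : A ∩ {x | p ≤ f x} ⊆ A ∩ {x | ⨅ y ∈ Ici p, H y ≤ (H ∘ f) x} :=
    inter_subset_inter_right _ fun x hx => show _ ≤ H (f x) from iInf₂_le (f x) hx
  refine (hop _ ?_).trans (le_gSugeno _)
  exact hp.trans
    (hμ _ _ (hA.inter (hf measurableSet_Ici)) (hA.inter (hHf measurableSet_Ici)) hsub)

lemma gSugeno_comp_le (hμ0 : μ ∅ = 0)
    (hμ : ∀ B C : Set X, MeasurableSet B → MeasurableSet C → B ⊆ C → μ B ≤ μ C)
    (hop : ∀ a b c d : ℝ≥0∞, a ≤ c → b ≤ d → op a b ≤ op c d) (hop0 : ∀ a, op a 0 = 0)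
    (hA : MeasurableSet A) (hf : Measurable f) (hHf : Measurable (H ∘ f)) {p : ℝ≥0∞}
    (hp : μ (A ∩ {x | p < f x}) ≤ p) :
    gSugeno op μ A (H ∘ f) ≤ max (op (⨆ y ∈ Icc 0 p, H y) (μ A)) (op (⨆ y, H y) p) := by
  refine iSup_le fun t => ?_
  have hmeas : MeasurableSet (A ∩ {x | t ≤ (H ∘ f) x}) := hA.inter (hHf measurableSet_Ici)
  rcases (A ∩ {x | t ≤ (H ∘ f) x}).eq_empty_or_nonempty with hempty | ⟨x, hx⟩
  · rw [hempty, hμ0, hop0]; exact zero_le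
  rcases le_or_gt t (⨆ y ∈ Icc 0 p, H y) with hlow | hhigh
  · exact le_max_of_le_left (hop _ _ _ _ hlow (hμ _ _ hmeas hA inter_subset_left))
  have hsub : A ∩ {x | t ≤ (H ∘ f) x} ⊆ A ∩ {x | p < f x} := fun y ⟨hyA, hy⟩ =>
    ⟨hyA, lt_of_not_ge fun hyp =>
      hhigh.not_ge (hy.trans (le_iSup₂ (f := fun y _ => H y) (f y) ⟨zero_le, hyp⟩))⟩
  exact le_max_of_le_right (hop _ _ _ _ (hx.2.trans (le_iSup H (f x)))
    ((hμ _ _ hmeas (hA.inter (hf measurableSet_Ioi)) hsub).trans hp))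

end

theorem stmt12_general [MeasurableSpace X] (μ : Set X → ℝ≥0∞) (A : Set X) (hA : MeasurableSet A)
    (hμ0 : μ ∅ = 0)
    (hμmono : ∀ B C : Set X, MeasurableSet B → MeasurableSet C → B ⊆ C → μ B ≤ μ C)
    (hμbelow : ∀ s : ℕ → Set X, (∀ n, MeasurableSet (s n)) → Monotone s →
      μ (⋃ n, s n) = ⨆ n, μ (s n))
    (hμabove : ∀ s : ℕ → Set X, (∀ n, MeasurableSet (s n)) → Antitone s →
      μ (⋂ n, s n) = ⨅ n, μ (s n))
    (op : ℝ≥0∞ → ℝ≥0∞ → ℝ≥0∞)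
    (hop : ∀ a b c d : ℝ≥0∞, a ≤ c → b ≤ d → op a b ≤ op c d)
    (hop0 : ∀ a : ℝ≥0∞, op a 0 = 0)
    (f : X → ℝ≥0∞) (hf : Measurable f)
    (H : ℝ≥0∞ → ℝ≥0∞) (hHf : Measurable (H ∘ f))
    (p : ℝ≥0∞) (hp : p = sugeno μ A f) :
    max (op (⨅ y ∈ Ici p, H y) p) (op (⨅ y : ℝ≥0∞, H y) (μ A))
        ≤ gSugeno op μ A (H ∘ f) ∧
    gSugeno op μ A (H ∘ f)
        ≤ max (op (⨆ y ∈ Icc 0 p, H y) (μ A)) (op (⨆ y : ℝ≥0∞, H y) p) := by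
  subst hp
  have hop_right : ∀ a, Monotone (op a) := fun _ _ _ h => hop _ _ _ _ le_rfl h
  refine ⟨max_le ?_ op_iInf_le_gSugeno_comp, ?_⟩
  · exact op_iInf_Ici_le_gSugeno_comp hμmono hop_right hA hf hHf
      (sugeno_le_measure_superlevel_sugeno hμmono hμabove hA hf)
  · exact gSugeno_comp_le hμ0 hμmono hop hop0 hA hf hHf
      (measure_sugeno_lt_le_sugeno hμbelow hA hf)

theorem stmt12 [MeasurableSpace X] (μ : Set X → ℝ≥0∞) (A : Set X) (hA : MeasurableSet A)
    (hμ0 : μ ∅ = 0)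
    (hμmono : ∀ B C : Set X, MeasurableSet B → MeasurableSet C → B ⊆ C → μ B ≤ μ C)
    (hμbelow : ∀ s : ℕ → Set X, (∀ n, MeasurableSet (s n)) → Monotone s →
      μ (⋃ n, s n) = ⨆ n, μ (s n))
    (hμabove : ∀ s : ℕ → Set X, (∀ n, MeasurableSet (s n)) → Antitone s →
      μ (⋂ n, s n) = ⨅ n, μ (s n))
    (op : ℝ≥0∞ → ℝ≥0∞ → ℝ≥0∞)
    (hop : ∀ a b c d : ℝ≥0∞, a ≤ c → b ≤ d → op a b ≤ op c d)
    (hop0 : ∀ a : ℝ≥0∞, op a 0 = 0)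
    (f : X → ℝ≥0∞) (hf : Measurable f)
    (H : ℝ≥0∞ → ℝ≥0∞) (hHf : Measurable (H ∘ f))
    (p : ℝ≥0∞) (hp : p = sugeno μ A f) (hpfin : p ≠ ⊤) :
    max (op (⨅ y ∈ Ici p, H y) p) (op (⨅ y : ℝ≥0∞, H y) (μ A))
        ≤ gSugeno op μ A (H ∘ f) ∧
    gSugeno op μ A (H ∘ f)
        ≤ max (op (⨆ y ∈ Icc 0 p, H y) (μ A)) (op (⨆ y : ℝ≥0∞, H y) p) :=
  stmt12_general μ A hA hμ0 hμmono hμbelow hμabove op hop hop0 f hf H hHf p hp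
end

section
/- Let μ be a monotone measure, H : [0,∞) → [0,∞) concave, m_p ∈ ∂H(p) with p = Su_{μ,A}(f) < ∞, and f : X → [0,∞) measurable. Then Su_{μ,A}(H∘f) ≤ min((H(p) − p·m_p)⁺, μ(A)) + Su_{μ,A}(m_p⁺ · f). -/
/-!
A subgradient `m` of `H` at `p` gives the pointwise bound `H ∘ f ≤ c + m⁺ f` with
`c = H p - p m`. For every level `t`, the level set `{t ≤ H ∘ f}` lies in `{t - c ≤ m⁺ f}`, and
`min (c + (t - c)) u ≤ min c u + min (t - c) u` splits the term of level `t` into a term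
bounded by `min c (μ A)` and a term of the Sugeno integral of `m⁺ f`.
-/

open scoped ENNReal
open Set

variable {X : Type*}

theorem min_add_le_min_add_min {α : Type*} [AddCommMonoid α] [LinearOrder α]
    [CanonicallyOrderedAdd α] (a b u : α) : min (a + b) u ≤ min a u + min b u := by
  rcases le_total u a with hua | hau
  · rw [min_eq_right hua]
    exact (min_le_right _ _).trans le_self_add
  rcases le_total u b with hub | hbu
  · rw [min_eq_right hub]
    exact (min_le_right _ _).trans le_add_self
  · rw [min_eq_left hau, min_eq_left hbu]
    exact min_le_left _ _

theorem Measurable.comp_of_continuousOn_Ioi [MeasurableSpace X] {f : X → ℝ}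
    (hf : Measurable f) (hfpos : ∀ x, 0 ≤ f x) {H : ℝ → ℝ}
    (hH : ContinuousOn H (Ioi 0)) : Measurable fun x => H (f x) := by
  classical
  -- a concave `H` may jump at `0`, so it is replaced there by a function continuous on `Iic 0`
  let G : ℝ → ℝ := (Iic 0).piecewise (fun _ => H 0) H
  have hG : Measurable G :=
    continuousOn_const.measurable_piecewise (by rwa [compl_Iic]) measurableSet_Iic
  have hGH : ∀ x, G (f x) = H (f x) := fun x => by
    by_cases hx : f x ≤ 0
    · simp [G, le_antisymm hx (hfpos x)]
    · simp [G, hx]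
  simpa only [Function.comp_def, hGH] using hG.comp hf

theorem ConcaveOn.measurable_comp [MeasurableSpace X] {f : X → ℝ}
    (hf : Measurable f) (hfpos : ∀ x, 0 ≤ f x) {H : ℝ → ℝ} (hH : ConcaveOn ℝ (Ici 0) H) :
    Measurable fun x => H (f x) :=
  hf.comp_of_continuousOn_Ioi hfpos (by simpa using hH.continuousOn_interior)

theorem sugeno_le_min_add_sugeno [MeasurableSpace X] {μ : Set X → ℝ≥0∞}
    {A : Set X} (hA : MeasurableSet A)
    (hμmono : ∀ B C : Set X, MeasurableSet B → MeasurableSet C → B ⊆ C → μ B ≤ μ C)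
    {g h : X → ℝ≥0∞} (hg : Measurable g) (hh : Measurable h) {c : ℝ≥0∞}
    (hgh : ∀ x ∈ A, g x ≤ c + h x) :
    sugeno μ A g ≤ min c (μ A) + sugeno μ A h := by
  refine iSup_le fun t => ?_
  set u := μ (A ∩ {x | t ≤ g x})
  have hsub : A ∩ {x | t ≤ g x} ⊆ A ∩ {x | t - c ≤ h x} := fun x ⟨hxA, hxg⟩ =>
    ⟨hxA, tsub_le_iff_left.mpr (hxg.trans (hgh x hxA))⟩
  have hgA : MeasurableSet (A ∩ {x | t ≤ g x}) := hA.inter (hg measurableSet_Ici)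
  have huA : u ≤ μ A := hμmono _ _ hgA hA inter_subset_left
  have huh : u ≤ μ (A ∩ {x | t - c ≤ h x}) :=
    hμmono _ _ hgA (hA.inter (hh measurableSet_Ici)) hsub
  calc min t u
      ≤ min (c + (t - c)) u := min_le_min_right _ le_add_tsub
    _ ≤ min c u + min (t - c) u := min_add_le_min_add_min _ _ _
    _ ≤ min c (μ A) + min (t - c) (μ (A ∩ {x | t - c ≤ h x})) := by gcongr
    _ ≤ min c (μ A) + sugeno μ A h := by
      gcongr
      exact le_iSup (fun s => min s (μ (A ∩ {x | s ≤ h x}))) (t - c)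

theorem stmt17_general [MeasurableSpace X] (μ : Set X → ℝ≥0∞) (A : Set X) (hA : MeasurableSet A)
    (hμmono : ∀ B C : Set X, MeasurableSet B → MeasurableSet C → B ⊆ C → μ B ≤ μ C)
    (f : X → ℝ) (hf : Measurable f) (hfpos : ∀ x, 0 ≤ f x)
    (H : ℝ → ℝ)
    (hHconc : ConcaveOn ℝ (Ici (0 : ℝ)) H)
    (p : ℝ≥0∞)
    (m : ℝ) (hm : ∀ y ∈ Ici (0 : ℝ), H y ≤ H p.toReal + m * (y - p.toReal)) :
    sugeno μ A (fun x => ENNReal.ofReal (H (f x)))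
      ≤ min (ENNReal.ofReal (H p.toReal - p.toReal * m)) (μ A)
        + sugeno μ A (fun x => ENNReal.ofReal (max m 0 * f x)) := by
  have hpoint : ∀ x, H (f x) ≤ H p.toReal - p.toReal * m + max m 0 * f x := fun x => by
    linarith [hm (f x) (hfpos x), mul_le_mul_of_nonneg_right (le_max_left m 0) (hfpos x)]
  refine sugeno_le_min_add_sugeno hA hμmono
    (hHconc.measurable_comp hf hfpos).ennreal_ofReal
    (measurable_const.mul hf).ennreal_ofReal fun x _ => ?_
  exact (ENNReal.ofReal_le_ofReal (hpoint x)).trans ENNReal.ofReal_add_le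

theorem stmt17 [MeasurableSpace X] (μ : Set X → ℝ≥0∞) (A : Set X) (hA : MeasurableSet A)
    (hμ0 : μ ∅ = 0)
    (hμmono : ∀ B C : Set X, MeasurableSet B → MeasurableSet C → B ⊆ C → μ B ≤ μ C)
    (f : X → ℝ) (hf : Measurable f) (hfpos : ∀ x, 0 ≤ f x)
    (H : ℝ → ℝ) (hHpos : ∀ y ∈ Ici (0 : ℝ), 0 ≤ H y)
    (hHconc : ConcaveOn ℝ (Ici (0 : ℝ)) H)
    (p : ℝ≥0∞) (hp : p = sugeno μ A (fun x => ENNReal.ofReal (f x))) (hpfin : p ≠ ⊤)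
    (m : ℝ) (hm : ∀ y ∈ Ici (0 : ℝ), H y ≤ H p.toReal + m * (y - p.toReal)) :
    sugeno μ A (fun x => ENNReal.ofReal (H (f x)))
      ≤ min (ENNReal.ofReal (H p.toReal - p.toReal * m)) (μ A)
        + sugeno μ A (fun x => ENNReal.ofReal (max m 0 * f x)) :=
  stmt17_general μ A hA hμmono f hf hfpos H hHconc p m hm
end
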